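/- arXiv:math/0212238 — 6 statements merged into one kernel-verified Lean document; each statement's English description precedes it below -/
import Mathlib

section
/- Let F be a field and R = F[x_1, ..., x_n]. Suppose x^v − g·x^w and x^b − h·x^c are binomials with g, h units in F, gcd(x^v, x^w) = 1 = gcd(x^b, x^c), and x^v > x^w and x^b > x^c in the graded reverse lexicographic ordering. If the ideal (x^v − g·x^w, x^b − h·x^c) equals R, then w = 0, c = 0, and there exists a positive rational number l such that v_i = l·b_i for all i. -/
/-!
If the exponent differences `v - w` and `b - c` are linearly independent over `ℚ`, the two
binomials have a common zero on the torus over an algebraic closure `K` of `F`: scale a dual family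
of the differences to integer vectors `P` with common factor `N`, and take products of powers of
`N`-th roots of `g` and `h` with exponents read off from `P`. Hence `b - c = m • (v - w)`, and
`m > 0` because both differences are positive for grevlex. By coprimality, `w i ≠ 0` exactly when
`v i - w i < 0`, so `w` and `c` have the same support; if they were nonzero, both binomials would
vanish at the origin. So `w = c = 0` and `b = m • v`.
-/

open MvPolynomial

/-- The graded reverse lexicographic order on exponent vectors:
`a < b` iff `a` has smaller total degree, or the degrees agree and at the last index
where `a` and `b` differ, `a` has the larger exponent. -/
def grevlexLt {n : ℕ} (a b : Fin n →₀ ℕ) : Prop :=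
  (∑ i, a i) < (∑ i, b i) ∨
    ((∑ i, a i) = (∑ i, b i) ∧ ∃ i, b i < a i ∧ ∀ j, i < j → a j = b j)

theorem LinearIndependent.exists_dual_apply_eq_ite {K V ι : Type*} [Field K] [AddCommGroup V]
    [Module K V] [DecidableEq ι] {u : ι → V} (hu : LinearIndependent K u) :
    ∃ f : ι → Module.Dual K V, ∀ j k, f k (u j) = if j = k then 1 else 0 := by
  choose f hf using fun k => LinearMap.exists_extend ((Module.Basis.span hu).coord k)
  refine ⟨f, fun j k => ?_⟩
  have := LinearMap.congr_fun (hf k) ⟨u j, Submodule.subset_span ⟨j, rfl⟩⟩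
  rw [LinearMap.comp_apply, Submodule.subtype_apply] at this
  rw [this, ← Module.Basis.span_apply hu j]
  simp [Finsupp.single_apply]

theorem exists_nat_mul_eq_intCast {ι : Type*} [Fintype ι] (q : ι → ℚ) :
    ∃ N : ℕ, 0 < N ∧ ∀ x, ∃ z : ℤ, (z : ℚ) = N * q x := by
  refine ⟨∏ x, (q x).den, Finset.prod_pos fun x _ => (q x).pos, fun x => ?_⟩
  obtain ⟨M, hM⟩ := Finset.dvd_prod_of_mem (fun x => (q x).den) (Finset.mem_univ x)
  refine ⟨(q x).num * M, ?_⟩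
  rw [hM]
  push_cast
  rw [← Rat.mul_den_eq_num]
  ring

theorem IsAlgClosed.exists_units_pow_eq {K : Type*} [Field K] [IsAlgClosed K] (a : Kˣ) {N : ℕ}
    (hN : 0 < N) : ∃ b : Kˣ, b ^ N = a := by
  obtain ⟨z, hz⟩ := IsAlgClosed.exists_pow_nat_eq (a : K) hN
  have hz0 : z ≠ 0 := by
    rintro rfl
    exact a.ne_zero (by rw [← hz, zero_pow hN.ne'])
  exact ⟨Units.mk0 z hz0, Units.ext (by simpa using hz)⟩

theorem Finset.zpow_sum {G ι : Type*} [CommGroup G] (a : G) (s : Finset ι) (f : ι → ℤ) :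
    a ^ ∑ i ∈ s, f i = ∏ i ∈ s, a ^ f i := by
  classical
  induction s using Finset.induction_on with
  | empty => simp
  | insert i s hi ih => rw [Finset.sum_insert hi, Finset.prod_insert hi, zpow_add, ih]

theorem exists_units_prod_zpow_eq {K ι σ : Type*} [Field K] [IsAlgClosed K] [Fintype ι]
    [Fintype σ] (u : ι → σ → ℤ) (hu : LinearIndependent ℚ fun k i => (u k i : ℚ))
    (a : ι → Kˣ) : ∃ t : σ → Kˣ, ∀ k, ∏ i, t i ^ u k i = a k := by
  classical
  obtain ⟨f, hf⟩ := hu.exists_dual_apply_eq_ite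
  obtain ⟨N, hN, hP⟩ :=
    exists_nat_mul_eq_intCast fun x : ι × σ => f x.1 fun i => if x.2 = i then 1 else 0
  choose P hP using hP
  have hdual : ∀ j k, ∑ i, u j i * P (k, i) = if j = k then (N : ℤ) else 0 := by
    intro j k
    have := hf j k
    rw [LinearMap.pi_apply_eq_sum_univ] at this
    apply Int.cast_injective (α := ℚ)
    push_cast
    calc ∑ i, (u j i : ℚ) * P (k, i)
        = N * ∑ i, (u j i : ℚ) • f k fun i' => if i = i' then 1 else 0 := by
          simp only [hP, Finset.mul_sum, smul_eq_mul]
          exact Finset.sum_congr rfl fun i _ => by ring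
      _ = if j = k then (N : ℚ) else 0 := by rw [this]; split_ifs <;> simp
  choose G hG using fun k => IsAlgClosed.exists_units_pow_eq (a k) hN
  refine ⟨fun i => ∏ k, G k ^ P (k, i), fun j => ?_⟩
  calc ∏ i, (∏ k, G k ^ P (k, i)) ^ u j i = ∏ k, G k ^ ∑ i, u j i * P (k, i) := by
        simp_rw [← Finset.prod_zpow, ← zpow_mul, Finset.zpow_sum]
        rw [Finset.prod_comm]
        simp_rw [mul_comm]
    _ = a j := by simp [hdual, hG]

theorem Ideal.span_ne_top_of_map_eq_zero {R S : Type*} [Semiring R] [Semiring S] [Nontrivial S]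
    (φ : R →+* S) {s : Set R} (hs : ∀ x ∈ s, φ x = 0) : Ideal.span s ≠ ⊤ := fun h =>
  RingHom.ker_ne_top φ (top_le_iff.1 (h ▸ Ideal.span_le.2 hs))

theorem aeval_monomial_sub_C_mul_monomial_eq_zero {F K σ : Type*} [CommRing F] [CommRing K]
    [Algebra F K] [Fintype σ] {t : σ → Kˣ} {v w : σ →₀ ℕ} {g : F}
    (ht : ((∏ i, t i ^ ((v i : ℤ) - w i) : Kˣ) : K) = algebraMap F K g) :
    aeval (fun i => (t i : K)) (monomial v 1 - C g * monomial w 1) = 0 := by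
  have hsplit : ∏ i, t i ^ v i = (∏ i, t i ^ ((v i : ℤ) - w i)) * ∏ i, t i ^ w i := by
    rw [← Finset.prod_mul_distrib]
    refine Finset.prod_congr rfl fun i _ => ?_
    rw [← zpow_natCast, ← zpow_natCast, ← zpow_add, sub_add_cancel]
  have := congrArg Units.val hsplit
  rw [Units.val_mul, ht] at this
  simp only [Units.coe_prod, Units.val_pow_eq_pow_val] at this
  simp [aeval_monomial, Finsupp.prod_pow, this]

theorem span_range_monomial_sub_C_mul_monomial_ne_top {F ι σ : Type*} [Field F] [Fintype ι]
    [Fintype σ] (v w : ι → σ →₀ ℕ) (g : ι → F) (hg : ∀ k, g k ≠ 0)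
    (hvw : LinearIndependent ℚ fun k i => (v k i : ℚ) - w k i) :
    Ideal.span (Set.range fun k =>
      monomial (v k) (1 : F) - C (g k) * monomial (w k) 1) ≠ ⊤ := by
  let K := AlgebraicClosure F
  have hu : LinearIndependent ℚ fun k i => (((v k i : ℤ) - w k i : ℤ) : ℚ) := by
    simpa using hvw
  obtain ⟨t, ht⟩ := exists_units_prod_zpow_eq (K := K) _ hu
    fun k => Units.mk0 (algebraMap F K (g k)) (by simpa using hg k)
  refine Ideal.span_ne_top_of_map_eq_zero (aeval fun i => (t i : K)).toRingHom ?_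
  rintro _ ⟨k, rfl⟩
  exact aeval_monomial_sub_C_mul_monomial_eq_zero (by rw [ht k, Units.val_mk0])

section BinomialPair

variable {F σ : Type*} [Field F] {g h : F} {v w b c : σ →₀ ℕ}

theorem span_pair_monomial_sub_C_mul_monomial_ne_top [Fintype σ] (hg : g ≠ 0) (hh : h ≠ 0)
    (hind : LinearIndependent ℚ ![fun i => (v i : ℚ) - w i, fun i => (b i : ℚ) - c i]) :
    Ideal.span {monomial v (1 : F) - C g * monomial w 1,
      monomial b 1 - C h * monomial c 1} ≠ ⊤ := by
  have hfam : (fun k i => (![v, b] k i : ℚ) - ![w, c] k i) =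
      ![fun i => (v i : ℚ) - w i, fun i => (b i : ℚ) - c i] := by
    funext k
    fin_cases k <;> rfl
  convert span_range_monomial_sub_C_mul_monomial_ne_top ![v, b] ![w, c] ![g, h]
    (by simpa [Fin.forall_fin_two] using ⟨hg, hh⟩) (hfam ▸ hind) using 2
  ext x
  simp [Fin.exists_fin_two, eq_comm]

theorem span_pair_monomial_sub_C_mul_monomial_ne_top_of_ne_zero (hv : v ≠ 0) (hw : w ≠ 0)
    (hb : b ≠ 0) (hc : c ≠ 0) :
    Ideal.span {monomial v (1 : F) - C g * monomial w 1,
      monomial b 1 - C h * monomial c 1} ≠ ⊤ := by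
  classical
  exact Ideal.span_ne_top_of_map_eq_zero constantCoeff
    (by simp [constantCoeff_monomial, hv, hw, hb, hc])

end BinomialPair

def IsGrevlexPos {σ : Type*} [Fintype σ] [LinearOrder σ] (d : σ → ℚ) : Prop :=
  0 < ∑ i, d i ∨ (∑ i, d i = 0 ∧ ∃ i, d i < 0 ∧ ∀ j, i < j → d j = 0)

namespace IsGrevlexPos

variable {σ : Type*} [Fintype σ] [LinearOrder σ] {d : σ → ℚ}

theorem ne_zero (hd : IsGrevlexPos d) : d ≠ 0 := by
  rintro rfl
  simp [IsGrevlexPos] at hd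

theorem pos_of_smul {m : ℚ} (hd : IsGrevlexPos d) (hmd : IsGrevlexPos (m • d)) : 0 < m := by
  have hm : m ≠ 0 := by
    rintro rfl
    exact hmd.ne_zero (zero_smul ℚ d)
  by_contra! hm_nonpos
  have hm_neg : m < 0 := hm_nonpos.lt_of_ne hm
  have hsum : ∑ i, (m • d) i = m * ∑ i, d i := by simp [Finset.mul_sum]
  rcases hd with hpos | ⟨hzero, i, hi, hafter⟩
  · rcases hmd with hmd | ⟨hmd, -⟩ <;> nlinarith
  rcases hmd with hmpos | ⟨-, k, hk, hmafter⟩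
  · rw [hsum, hzero, mul_zero] at hmpos
    exact hmpos.false
  change m * d k < 0 at hk
  rcases lt_trichotomy i k with hik | rfl | hki
  · rw [hafter k hik, mul_zero] at hk
    exact hk.false
  · nlinarith
  · have : m * d i = 0 := hmafter i hki
    nlinarith

end IsGrevlexPos

theorem grevlexLt_iff_isGrevlexPos {n : ℕ} {a b : Fin n →₀ ℕ} :
    grevlexLt a b ↔ IsGrevlexPos fun i => (b i : ℚ) - a i := by
  simp only [grevlexLt, IsGrevlexPos, Finset.sum_sub_distrib, sub_pos, sub_neg, sub_eq_zero]
  norm_cast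
  simp only [eq_comm]

theorem grevlexLt.ne_zero {n : ℕ} {a b : Fin n →₀ ℕ} (h : grevlexLt a b) : b ≠ 0 := by
  rintro rfl
  rcases h with h | ⟨h, i, hi, -⟩ <;> simp_all

theorem eq_zero_iff_natCast_sub_nonneg {a b : ℕ} (h : min a b = 0) :
    b = 0 ↔ 0 ≤ (a : ℚ) - b := by
  rw [sub_nonneg, Nat.cast_le]
  omega

theorem stmt3 {F : Type*} [Field F] (n : ℕ) (g h : F) (hg : IsUnit g) (hh : IsUnit h)
    (v w b c : Fin n →₀ ℕ)
    (hvw : ∀ i, min (v i) (w i) = 0) (hbc : ∀ i, min (b i) (c i) = 0)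
    (hv : grevlexLt w v) (hb : grevlexLt c b)
    (hR : Ideal.span {(monomial v (1 : F)) - MvPolynomial.C g * monomial w 1,
        (monomial b (1 : F)) - MvPolynomial.C h * monomial c 1} = ⊤) :
    w = 0 ∧ c = 0 ∧ ∃ l : ℚ, 0 < l ∧ ∀ i, (v i : ℚ) = l * (b i : ℚ) := by
  set U : Fin n → ℚ := fun i => (v i : ℚ) - w i
  set D : Fin n → ℚ := fun i => (b i : ℚ) - c i
  have hU : IsGrevlexPos U := grevlexLt_iff_isGrevlexPos.1 hv
  obtain ⟨m, hm⟩ : ∃ m : ℚ, m • U = D := by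
    by_contra! hind
    exact span_pair_monomial_sub_C_mul_monomial_ne_top hg.ne_zero hh.ne_zero
      ((LinearIndependent.pair_iff' hU.ne_zero).2 hind) hR
  have hm_pos : 0 < m := hU.pos_of_smul (hm ▸ grevlexLt_iff_isGrevlexPos.1 hb)
  have hsupp : ∀ i, w i = 0 ↔ c i = 0 := fun i => by
    rw [eq_zero_iff_natCast_sub_nonneg (hvw i), eq_zero_iff_natCast_sub_nonneg (hbc i)]
    change 0 ≤ U i ↔ 0 ≤ D i
    rw [← hm, Pi.smul_apply, smul_nonneg_iff_nonneg_of_pos_left hm_pos]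
  have hw : w = 0 := by
    by_contra hw
    have hc : c ≠ 0 := fun hc => hw (Finsupp.ext fun i => (hsupp i).2 (by simp [hc]))
    exact span_pair_monomial_sub_C_mul_monomial_ne_top_of_ne_zero hv.ne_zero hw hb.ne_zero hc hR
  have hc : c = 0 := Finsupp.ext fun i => (hsupp i).1 (by simp [hw])
  refine ⟨hw, hc, m⁻¹, inv_pos.2 hm_pos, fun i => ?_⟩
  have hbv : (b i : ℚ) = m * v i := by simpa [U, D, hw, hc] using (congrFun hm i).symm
  rw [hbv, inv_mul_cancel_left₀ hm_pos.ne']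
end

section
/- Let F be a field of prime characteristic p and R = F[x_1,...,x_n]. Let I = (x^u(x^v − g)) and J = (x^a(x^b − h)) with g, h units of F, and suppose r(x^v − g) + s(x^b − h) = 1 for some r, s ∈ R. Then for every power q = p^e, the monomial lcm(x^{qu}, x^a) lies in the ideal J + I^[q]. -/
open MvPolynomial

theorem stmt5 {F : Type*} [Field F] (p : ℕ) (hp : p.Prime) [CharP F p]
    (n : ℕ) (g h : F) (hg : IsUnit g) (hh : IsUnit h)
    (u v a b : Fin n →₀ ℕ)
    (r s : MvPolynomial (Fin n) F)
    (hrs : r * (monomial v 1 - C g) + s * (monomial b 1 - C h) = 1)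
    (e : ℕ) (q : ℕ) (hq : q = p ^ e) :
    monomial ((q • u) ⊔ a) (1 : F) ∈
      Ideal.span {monomial a 1 * (monomial b 1 - C h),
        (monomial u 1 * (monomial v 1 - C g)) ^ q} := by
  have hq1 : 1 ≤ q := by
    subst hq; exact Nat.one_le_pow _ _ hp.pos
  set A := monomial v 1 - C g with hA
  set B := monomial b 1 - C h with hB
  haveI : Fact p.Prime := ⟨hp⟩
  have key : r ^ q * A ^ q + s ^ q * B ^ q = 1 := by
    subst hq
    have h0 := congrArg (· ^ p ^ e) hrs
    simpa [add_pow_char_pow, mul_pow] using h0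
  set S := (q • u) ⊔ a with hS
  have h1 : monomial (S - q • u) (1 : F) * monomial (q • u) 1 = monomial S 1 := by
    rw [monomial_mul, mul_one, tsub_add_cancel_of_le le_sup_left]
  have h2 : monomial (S - a) (1 : F) * monomial a 1 = monomial S 1 := by
    rw [monomial_mul, mul_one, tsub_add_cancel_of_le le_sup_right]
  have hpow : (monomial u (1 : F)) ^ q = monomial (q • u) 1 := by
    rw [monomial_pow, one_pow]
  have hBq : B ^ q = B ^ (q - 1) * B := by
    rw [← pow_succ, Nat.sub_add_cancel hq1]
  have heq : monomial S (1 : F)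
      = monomial (S - q • u) 1 * r ^ q * (monomial u 1 * A) ^ q
        + monomial (S - a) 1 * (s ^ q * B ^ (q - 1)) * (monomial a 1 * B) := by
    calc monomial S (1 : F)
        = monomial S 1 * (r ^ q * A ^ q + s ^ q * (B ^ (q - 1) * B)) := by
          rw [← hBq, key, mul_one]
      _ = _ := by
          rw [mul_pow, hpow]
          linear_combination (-(r ^ q * A ^ q)) * h1 - (s ^ q * B ^ (q - 1) * B) * h2
  rw [heq]
  exact Ideal.add_mem _
    (Ideal.mul_mem_left _ _ (Ideal.subset_span (by simp)))
    (Ideal.mul_mem_left _ _ (Ideal.subset_span (by simp)))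
end

section
/- Let F be a field of characteristic 3, R = F[x,y,z], q = 3^e. The set {y^3 − xy, x^{q−1}y^2 z^q − x^{2q}, x^{2q}y − x^q y z^q, x^{3q+1} − x^{2q+1} z^q} generates the ideal (y^3 − xy) + (y^2 z − x^2)^[q] = (y^3 − xy, y^{2q} z^q − x^{2q}). -/
open MvPolynomial

theorem stmt6 {F : Type*} [Field F] [CharP F 3] (e : ℕ) (q : ℕ) (hq : q = 3 ^ e) :
    (Ideal.span {(X 1 ^ 3 - X 0 * X 1 : MvPolynomial (Fin 3) F),
        X 0 ^ (q - 1) * X 1 ^ 2 * X 2 ^ q - X 0 ^ (2 * q),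
        X 0 ^ (2 * q) * X 1 - X 0 ^ q * X 1 * X 2 ^ q,
        X 0 ^ (3 * q + 1) - X 0 ^ (2 * q + 1) * X 2 ^ q} =
      Ideal.span {(X 1 ^ 3 - X 0 * X 1 : MvPolynomial (Fin 3) F),
        (X 1 ^ 2 * X 2 - X 0 ^ 2) ^ q}) ∧
    (Ideal.span {(X 1 ^ 3 - X 0 * X 1 : MvPolynomial (Fin 3) F),
        (X 1 ^ 2 * X 2 - X 0 ^ 2) ^ q} =
      Ideal.span {(X 1 ^ 3 - X 0 * X 1 : MvPolynomial (Fin 3) F),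
        X 1 ^ (2 * q) * X 2 ^ q - X 0 ^ (2 * q)}) := by
  haveI : Fact (Nat.Prime 3) := ⟨by norm_num⟩
  -- Frobenius identity
  have hfrob : ((X 1 ^ 2 * X 2 - X 0 ^ 2 : MvPolynomial (Fin 3) F)) ^ q =
      X 1 ^ (2 * q) * X 2 ^ q - X 0 ^ (2 * q) := by
    subst hq
    rw [sub_pow_char_pow, mul_pow, ← pow_mul, ← pow_mul, mul_comm 2 (3 ^ e)]
  have h2 : Ideal.span {(X 1 ^ 3 - X 0 * X 1 : MvPolynomial (Fin 3) F),
        (X 1 ^ 2 * X 2 - X 0 ^ 2) ^ q} =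
      Ideal.span {(X 1 ^ 3 - X 0 * X 1 : MvPolynomial (Fin 3) F),
        X 1 ^ (2 * q) * X 2 ^ q - X 0 ^ (2 * q)} := by rw [hfrob]
  refine ⟨?_, h2⟩
  rw [h2]
  -- now pure algebra; write q = k + 1
  have hq1 : 1 ≤ q := hq ▸ Nat.one_le_pow _ _ (by norm_num)
  obtain ⟨k, rfl⟩ : ∃ k, q = k + 1 := ⟨q - 1, by omega⟩
  clear h2 hfrob hq
  set x : MvPolynomial (Fin 3) F := X 0
  set y : MvPolynomial (Fin 3) F := X 1
  set z : MvPolynomial (Fin 3) F := X 2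
  obtain ⟨S, hS⟩ : (y ^ 2 - x) ∣ (y ^ 2) ^ k - x ^ k := sub_dvd_pow_sub_pow _ _ _
  obtain ⟨T, hT⟩ : (y ^ 2 - x) ∣ (y ^ 2) ^ (k + 1) - x ^ (k + 1) := sub_dvd_pow_sub_pow _ _ _
  simp only [Nat.add_sub_cancel]
  set a := y ^ 3 - x * y with ha
  set g := y ^ (2 * (k + 1)) * z ^ (k + 1) - x ^ (2 * (k + 1)) with hg
  set b := x ^ k * y ^ 2 * z ^ (k + 1) - x ^ (2 * (k + 1)) with hb
  set c := x ^ (2 * (k + 1)) * y - x ^ (k + 1) * y * z ^ (k + 1) with hc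
  set d := x ^ (3 * (k + 1) + 1) - x ^ (2 * (k + 1) + 1) * z ^ (k + 1) with hd
  have hbm : b ∈ Ideal.span {a, g} := by
    rw [Ideal.mem_span_pair]
    exact ⟨-(z ^ (k + 1) * y * S), 1, by
      rw [ha, hg, hb]; linear_combination (z ^ (k + 1) * y ^ 2) * hS⟩
  have hcm : c ∈ Ideal.span {a, g} := by
    rw [Ideal.mem_span_pair]
    exact ⟨z ^ (k + 1) * T, -y, by
      rw [ha, hg, hc]; linear_combination (-(y * z ^ (k + 1))) * hT⟩
  have ham : a ∈ Ideal.span ({a, g} : Set (MvPolynomial (Fin 3) F)) :=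
    Ideal.subset_span (by simp)
  have hgm : g ∈ Ideal.span ({a, g} : Set (MvPolynomial (Fin 3) F)) :=
    Ideal.subset_span (by simp)
  have hdm : d ∈ Ideal.span {a, g} := by
    have hid : d = (-(x * (x ^ (k + 1) - z ^ (k + 1))) + y ^ 2 * (x ^ (k + 1) - z ^ (k + 1))) * g
        + (-(z ^ (k + 1) * (x ^ (k + 1) - z ^ (k + 1)) * y ^ (2 * k + 1))) * a
        + (x ^ (k + 1) * y) * c := by
      rw [ha, hg, hc, hd]; ring
    rw [hid]
    exact add_mem (add_mem (Ideal.mul_mem_left _ _ hgm) (Ideal.mul_mem_left _ _ ham))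
      (Ideal.mul_mem_left _ _ hcm)
  apply le_antisymm
  · rw [Ideal.span_le]
    rintro p hp
    simp only [Set.mem_insert_iff, Set.mem_singleton_iff] at hp
    rcases hp with rfl | rfl | rfl | rfl
    · exact ham
    · exact hbm
    · exact hcm
    · exact hdm
  · rw [Ideal.span_le]
    rintro p hp
    simp only [Set.mem_insert_iff, Set.mem_singleton_iff] at hp
    have haS : a ∈ Ideal.span ({a, b, c, d} : Set (MvPolynomial (Fin 3) F)) :=
      Ideal.subset_span (by simp)
    have hbS : b ∈ Ideal.span ({a, b, c, d} : Set (MvPolynomial (Fin 3) F)) :=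
      Ideal.subset_span (by simp)
    rcases hp with rfl | rfl
    · exact haS
    · have hid : g = b + (z ^ (k + 1) * y * S) * a := by
        rw [ha, hg, hb]; linear_combination (z ^ (k + 1) * y ^ 2) * hS
      rw [hid]
      exact add_mem hbS (Ideal.mul_mem_left _ _ haS)
end

section
/- Let F = Z/2Z and R = F[x,y,z]. For every q = 2^e, the polynomial y^{2q+1} − x^{2q−1} z^2 lies in the ideal (xy − z^2, x^{2q} − y^{2q}), and the ideal (xy − z^2) + (x^2 − y^2)^[q] equals (xy − z^2, x^{2q} − y^{2q}, y^{2q+1} − x^{2q−1} z^2). -/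
open MvPolynomial

theorem stmt9 (e : ℕ) (q : ℕ) (hq : q = 2 ^ e) :
    ((X 1 ^ (2 * q + 1) - X 0 ^ (2 * q - 1) * X 2 ^ 2 : MvPolynomial (Fin 3) (ZMod 2)) ∈
      Ideal.span {(X 0 * X 1 - X 2 ^ 2 : MvPolynomial (Fin 3) (ZMod 2)),
        X 0 ^ (2 * q) - X 1 ^ (2 * q)}) ∧
    (Ideal.span {(X 0 * X 1 - X 2 ^ 2 : MvPolynomial (Fin 3) (ZMod 2)),
        X 0 ^ (2 * q) - X 1 ^ (2 * q)} =
      Ideal.span {(X 0 * X 1 - X 2 ^ 2 : MvPolynomial (Fin 3) (ZMod 2)),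
        X 0 ^ (2 * q) - X 1 ^ (2 * q),
        X 1 ^ (2 * q + 1) - X 0 ^ (2 * q - 1) * X 2 ^ 2}) := by
  have hq1 : 1 ≤ q := by subst hq; exact Nat.one_le_two_pow
  have h2 : 2 * q = (2 * q - 1) + 1 := by omega
  have hid : (X 1 ^ (2 * q + 1) - X 0 ^ (2 * q - 1) * X 2 ^ 2 : MvPolynomial (Fin 3) (ZMod 2))
      = X 0 ^ (2 * q - 1) * (X 0 * X 1 - X 2 ^ 2)
        - X 1 * (X 0 ^ (2 * q) - X 1 ^ (2 * q)) := by
    obtain ⟨k, hk⟩ : ∃ k, 2 * q = k + 1 := ⟨2 * q - 1, by omega⟩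
    have e1 : 2 * q + 1 = k + 2 := by omega
    have e2 : 2 * q - 1 = k := by omega
    rw [e1, e2, hk]; ring
  have hmem : (X 1 ^ (2 * q + 1) - X 0 ^ (2 * q - 1) * X 2 ^ 2 : MvPolynomial (Fin 3) (ZMod 2)) ∈
      Ideal.span {(X 0 * X 1 - X 2 ^ 2 : MvPolynomial (Fin 3) (ZMod 2)),
        X 0 ^ (2 * q) - X 1 ^ (2 * q)} := by
    rw [hid]
    exact sub_mem (Ideal.mul_mem_left _ _ (Ideal.subset_span (by simp)))
      (Ideal.mul_mem_left _ _ (Ideal.subset_span (by simp)))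
  refine ⟨hmem, ?_⟩
  have hset : ({(X 0 * X 1 - X 2 ^ 2 : MvPolynomial (Fin 3) (ZMod 2)),
        X 0 ^ (2 * q) - X 1 ^ (2 * q),
        X 1 ^ (2 * q + 1) - X 0 ^ (2 * q - 1) * X 2 ^ 2} : Set (MvPolynomial (Fin 3) (ZMod 2)))
      = insert (X 1 ^ (2 * q + 1) - X 0 ^ (2 * q - 1) * X 2 ^ 2)
          {(X 0 * X 1 - X 2 ^ 2 : MvPolynomial (Fin 3) (ZMod 2)),
            X 0 ^ (2 * q) - X 1 ^ (2 * q)} := by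
    ext p; simp only [Set.mem_insert_iff, Set.mem_singleton_iff]; tauto
  rw [hset]
  conv_rhs => rw [Ideal.span_insert]
  exact (sup_eq_right.mpr (Ideal.span_le.mpr (Set.singleton_subset_iff.mpr hmem))).symm
end

section
/- Let F = Z/3Z, R = F[x,y,z,w], I = (x^2 y^2 z w^5 − x y z^2 w^2), J = (x y^2 z^3 w − x y z w^3), and q = 3^e. Then for every k with 0 ≤ k ≤ (3q−1)/2, the binomial x^{2q} y^{(3q+1−2k)/2} z w^{6q−1+2k} − x^q y z^{2k+2} w^{4q−2} lies in the ideal J + I^[q]. -/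
open MvPolynomial

lemma chain13 (a b c d n : ℕ) :
    (X 0 ^ (a+1) * X 1 ^ (b+1) * X 2 ^ (c+1) * X 3 ^ (d+1+2*n)
      - X 0 ^ (a+1) * X 1 ^ (b+1+n) * X 2 ^ (c+1+2*n) * X 3 ^ (d+1) :
      MvPolynomial (Fin 4) (ZMod 3)) ∈
      Ideal.span {(X 0 * X 1 ^ 2 * X 2 ^ 3 * X 3 - X 0 * X 1 * X 2 * X 3 ^ 3 :
        MvPolynomial (Fin 4) (ZMod 3))} := by
  induction n generalizing b c with
  | zero => simp
  | succ n ih =>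
    have step : (X 0 ^ (a+1) * X 1 ^ (b+1) * X 2 ^ (c+1) * X 3 ^ (d+2*n+3)
        - X 0 ^ (a+1) * X 1 ^ (b+2) * X 2 ^ (c+3) * X 3 ^ (d+2*n+1) :
        MvPolynomial (Fin 4) (ZMod 3)) ∈
        Ideal.span {(X 0 * X 1 ^ 2 * X 2 ^ 3 * X 3 - X 0 * X 1 * X 2 * X 3 ^ 3 :
          MvPolynomial (Fin 4) (ZMod 3))} := by
      refine Ideal.mem_span_singleton.2 ⟨-(X 0 ^ a * X 1 ^ b * X 2 ^ c * X 3 ^ (d+2*n)), ?_⟩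
      ring
    have h2 := ih (b+1) (c+2)
    have := add_mem step h2
    convert this using 1
    ring

theorem stmt13 (e : ℕ) (q : ℕ) (hq : q = 3 ^ e) (k : ℕ) (hk : k ≤ (3 * q - 1) / 2) :
    (X 0 ^ (2 * q) * X 1 ^ ((3 * q + 1 - 2 * k) / 2) * X 2 * X 3 ^ (6 * q - 1 + 2 * k) -
        X 0 ^ q * X 1 * X 2 ^ (2 * k + 2) * X 3 ^ (4 * q - 2) :
        MvPolynomial (Fin 4) (ZMod 3)) ∈
      Ideal.span {(X 0 * X 1 ^ 2 * X 2 ^ 3 * X 3 - X 0 * X 1 * X 2 * X 3 ^ 3 :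
          MvPolynomial (Fin 4) (ZMod 3)),
        (X 0 ^ 2 * X 1 ^ 2 * X 2 * X 3 ^ 5 - X 0 * X 1 * X 2 ^ 2 * X 3 ^ 2) ^ q} := by
  have hodd : Odd q := hq ▸ (Odd.pow (⟨1, by norm_num⟩ : Odd 3))
  obtain ⟨r, hr⟩ := hodd
  obtain ⟨j, hj⟩ : ∃ j, k + j = 3 * r + 1 := ⟨3 * r + 1 - k, by omega⟩
  have hfq : ((X 0 ^ 2 * X 1 ^ 2 * X 2 * X 3 ^ 5 - X 0 * X 1 * X 2 ^ 2 * X 3 ^ 2 :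
      MvPolynomial (Fin 4) (ZMod 3))) ^ (2 * r + 1)
      = X 0 ^ (4*r+2) * X 1 ^ (4*r+2) * X 2 ^ (2*r+1) * X 3 ^ (10*r+5)
        - X 0 ^ (2*r+1) * X 1 ^ (2*r+1) * X 2 ^ (4*r+2) * X 3 ^ (4*r+2) := by
    rw [← hr, hq, sub_pow_char_pow, ← hq, hr]
    ring
  rw [show (3*q+1-2*k)/2 = j+1 by omega, show 2*q = 4*r+2 by omega,
    show 6*q-1+2*k = 12*r+5+2*k by omega, show 4*q-2 = 8*r+2 by omega, hr]
  have hsub : Ideal.span {(X 0 * X 1 ^ 2 * X 2 ^ 3 * X 3 - X 0 * X 1 * X 2 * X 3 ^ 3 :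
      MvPolynomial (Fin 4) (ZMod 3))} ≤
      Ideal.span {(X 0 * X 1 ^ 2 * X 2 ^ 3 * X 3 - X 0 * X 1 * X 2 * X 3 ^ 3 :
        MvPolynomial (Fin 4) (ZMod 3)),
      (X 0 ^ 2 * X 1 ^ 2 * X 2 * X 3 ^ 5 - X 0 * X 1 * X 2 ^ 2 * X 3 ^ 2) ^ (2*r+1)} :=
    Ideal.span_mono (by simp)
  have m1 : (X 0 ^ (4*r+2) * X 1 ^ (j+1) * X 2 * X 3 ^ (12*r+5+2*k)
      - X 0 ^ (4*r+2) * X 1 ^ (4*r+2) * X 2 ^ (2*r+2*k+1) * X 3 ^ (10*r+5) :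
      MvPolynomial (Fin 4) (ZMod 3)) ∈
      Ideal.span {(X 0 * X 1 ^ 2 * X 2 ^ 3 * X 3 - X 0 * X 1 * X 2 * X 3 ^ 3 :
        MvPolynomial (Fin 4) (ZMod 3))} := by
    have := chain13 (4*r+1) j 0 (10*r+4) (r+k)
    rw [show j+1+(r+k) = 4*r+2 by omega, show 0+1+2*(r+k) = 2*r+2*k+1 by omega,
      show 10*r+4+1+2*(r+k) = 12*r+5+2*k by omega] at this
    convert this using 1
    ring
  have m2 : (X 0 ^ (2*r+1) * X 1 * X 2 ^ (2*k+2) * X 3 ^ (8*r+2)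
      - X 0 ^ (2*r+1) * X 1 ^ (2*r+1) * X 2 ^ (4*r+2*k+2) * X 3 ^ (4*r+2) :
      MvPolynomial (Fin 4) (ZMod 3)) ∈
      Ideal.span {(X 0 * X 1 ^ 2 * X 2 ^ 3 * X 3 - X 0 * X 1 * X 2 * X 3 ^ 3 :
        MvPolynomial (Fin 4) (ZMod 3))} := by
    have := chain13 (2*r) 0 (2*k+1) (4*r+1) (2*r)
    convert this using 1
    ring
  have m3 : (X 2 ^ (2*k) * (X 0 ^ 2 * X 1 ^ 2 * X 2 * X 3 ^ 5
      - X 0 * X 1 * X 2 ^ 2 * X 3 ^ 2) ^ (2*r+1) : MvPolynomial (Fin 4) (ZMod 3)) ∈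
      Ideal.span {(X 0 * X 1 ^ 2 * X 2 ^ 3 * X 3 - X 0 * X 1 * X 2 * X 3 ^ 3 :
        MvPolynomial (Fin 4) (ZMod 3)),
      (X 0 ^ 2 * X 1 ^ 2 * X 2 * X 3 ^ 5 - X 0 * X 1 * X 2 ^ 2 * X 3 ^ 2) ^ (2*r+1)} :=
    Ideal.mul_mem_left _ _ (Ideal.subset_span (by simp))
  have final := add_mem (sub_mem (hsub m1) (hsub m2)) m3
  convert final using 1
  rw [hfq]
  ring
end

section
/- Let F = Z/2Z, R = F[x,y,z], I = (x^2 y^2 z − x y z^2), J = (x y^2 z^5 − x^2 y z), and q = 2^e with e ≥ 3. Then the polynomial x^{(9/4)q − 1} y^{(7/4)q + 1} z^4 − x^{(3/2)q − 1} y^{(1/2)q + 1} z^4 lies in the ideal J + I^[q]. -/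
open MvPolynomial

private lemma key17 (k a b c : ℕ) :
    (X 0 ^ (a + 1) * X 1 ^ (b + 2 + k) * X 2 ^ (c + 1 + 4 * k) +
        X 0 ^ (a + 1 + k) * X 1 ^ (b + 2) * X 2 ^ (c + 1) :
        MvPolynomial (Fin 3) (ZMod 2)) ∈
      Ideal.span {(X 0 * X 1 ^ 2 * X 2 ^ 5 - X 0 ^ 2 * X 1 * X 2 :
          MvPolynomial (Fin 3) (ZMod 2))} := by
  induction k generalizing a with
  | zero =>
      have : (X 0 ^ (a + 1) * X 1 ^ (b + 2 + 0) * X 2 ^ (c + 1 + 4 * 0) +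
          X 0 ^ (a + 1 + 0) * X 1 ^ (b + 2) * X 2 ^ (c + 1) :
          MvPolynomial (Fin 3) (ZMod 2)) = 0 := by
        simpa using CharTwo.add_self_eq_zero
          (X 0 ^ (a + 1) * X 1 ^ (b + 2) * X 2 ^ (c + 1) : MvPolynomial (Fin 3) (ZMod 2))
      rw [this]
      exact Ideal.zero_mem _
  | succ k ih =>
      have hg : (X 0 * X 1 ^ 2 * X 2 ^ 5 - X 0 ^ 2 * X 1 * X 2 :
          MvPolynomial (Fin 3) (ZMod 2)) ∈
          Ideal.span {(X 0 * X 1 ^ 2 * X 2 ^ 5 - X 0 ^ 2 * X 1 * X 2 :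
          MvPolynomial (Fin 3) (ZMod 2))} := Ideal.subset_span rfl
      have h1 := Ideal.mul_mem_right
        ((X 0 : MvPolynomial (Fin 3) (ZMod 2)) ^ a * X 1 ^ (b + 1 + k) * X 2 ^ (c + 4 * k)) _ hg
      have h2 := ih (a + 1)
      have h3 := Ideal.add_mem _ h1 h2
      have heq : (X 0 ^ (a + 1) * X 1 ^ (b + 2 + (k + 1)) * X 2 ^ (c + 1 + 4 * (k + 1)) +
          X 0 ^ (a + 1 + (k + 1)) * X 1 ^ (b + 2) * X 2 ^ (c + 1) :
          MvPolynomial (Fin 3) (ZMod 2)) =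
          (X 0 * X 1 ^ 2 * X 2 ^ 5 - X 0 ^ 2 * X 1 * X 2) *
            (X 0 ^ a * X 1 ^ (b + 1 + k) * X 2 ^ (c + 4 * k)) +
          (X 0 ^ (a + 1 + 1) * X 1 ^ (b + 2 + k) * X 2 ^ (c + 1 + 4 * k) +
            X 0 ^ (a + 1 + 1 + k) * X 1 ^ (b + 2) * X 2 ^ (c + 1)) := by
        ring
      rw [heq]
      exact h3

theorem stmt17 (e : ℕ) (he : 3 ≤ e) (q : ℕ) (hq : q = 2 ^ e) :
    (X 0 ^ (9 * q / 4 - 1) * X 1 ^ (7 * q / 4 + 1) * X 2 ^ 4 -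
        X 0 ^ (3 * q / 2 - 1) * X 1 ^ (q / 2 + 1) * X 2 ^ 4 :
        MvPolynomial (Fin 3) (ZMod 2)) ∈
      Ideal.span {(X 0 * X 1 ^ 2 * X 2 ^ 5 - X 0 ^ 2 * X 1 * X 2 :
          MvPolynomial (Fin 3) (ZMod 2)),
        (X 0 ^ 2 * X 1 ^ 2 * X 2 - X 0 * X 1 * X 2 ^ 2) ^ q} := by
  -- write q = 8 * (n + 1)
  obtain ⟨n, hn⟩ : ∃ n : ℕ, 2 ^ (e - 3) = n + 1 :=
    ⟨2 ^ (e - 3) - 1, by have := Nat.one_le_two_pow (n := e - 3); omega⟩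
  have hq8 : q = 8 * n + 8 := by
    have h8 : 2 ^ e = 2 ^ (e - 3) * 8 := by
      conv_lhs => rw [show e = (e - 3) + 3 by omega]
      rw [pow_add]; norm_num
    omega
  set R := MvPolynomial (Fin 3) (ZMod 2)
  have htwo : (2 : R) = 0 := by
    have := CharP.cast_eq_zero R 2
    exact_mod_cast this
  -- the two key reductions
  have hK1 := key17 (2 * n + 1) (16 * n + 15) (14 * n + 13) 3
  have hK2 := key17 (4 * n + 3) (8 * n + 7) (4 * n + 3) 3
  have hmono : Ideal.span {(X 0 * X 1 ^ 2 * X 2 ^ 5 - X 0 ^ 2 * X 1 * X 2 : R)} ≤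
      Ideal.span {(X 0 * X 1 ^ 2 * X 2 ^ 5 - X 0 ^ 2 * X 1 * X 2 : R),
        (X 0 ^ 2 * X 1 ^ 2 * X 2 - X 0 * X 1 * X 2 ^ 2) ^ q} :=
    Ideal.span_mono (by simp)
  have hG : ((X 0 ^ 2 * X 1 ^ 2 * X 2 - X 0 * X 1 * X 2 ^ 2 : R)) ^ q ∈
      Ideal.span {(X 0 * X 1 ^ 2 * X 2 ^ 5 - X 0 ^ 2 * X 1 * X 2 : R),
        (X 0 ^ 2 * X 1 ^ 2 * X 2 - X 0 * X 1 * X 2 ^ 2) ^ q} :=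
    Ideal.subset_span (by simp)
  have hsum := Ideal.add_mem _ (Ideal.add_mem _ (hmono hK1) (hmono hK2)) hG
  -- frobenius expansion of the second generator
  have hpow : ((X 0 ^ 2 * X 1 ^ 2 * X 2 - X 0 * X 1 * X 2 ^ 2 : R)) ^ q =
      X 0 ^ (16 * n + 16) * X 1 ^ (16 * n + 16) * X 2 ^ (8 * n + 8) +
      X 0 ^ (8 * n + 8) * X 1 ^ (8 * n + 8) * X 2 ^ (16 * n + 16) := by
    have hch : (X 0 ^ 2 * X 1 ^ 2 * X 2 - X 0 * X 1 * X 2 ^ 2 : R) ^ q =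
        (X 0 ^ 2 * X 1 ^ 2 * X 2 : R) ^ q + (X 0 * X 1 * X 2 ^ 2 : R) ^ q := by
      rw [hq, CharTwo.sub_eq_add, add_pow_char_pow]
    rw [hch, hq8]
    ring
  -- exponent arithmetic
  have e1 : 9 * q / 4 - 1 = 18 * n + 17 := by omega
  have e2 : 7 * q / 4 + 1 = 14 * n + 15 := by omega
  have e3 : 3 * q / 2 - 1 = 12 * n + 11 := by omega
  have e4 : q / 2 + 1 = 4 * n + 5 := by omega
  rw [e1, e2, e3, e4]
  have hfin : (X 0 ^ (18 * n + 17) * X 1 ^ (14 * n + 15) * X 2 ^ 4 -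
      X 0 ^ (12 * n + 11) * X 1 ^ (4 * n + 5) * X 2 ^ 4 : R) =
      ((X 0 ^ (16 * n + 15 + 1) * X 1 ^ (14 * n + 13 + 2 + (2 * n + 1)) *
          X 2 ^ (3 + 1 + 4 * (2 * n + 1)) +
        X 0 ^ (16 * n + 15 + 1 + (2 * n + 1)) * X 1 ^ (14 * n + 13 + 2) * X 2 ^ (3 + 1)) +
      (X 0 ^ (8 * n + 7 + 1) * X 1 ^ (4 * n + 3 + 2 + (4 * n + 3)) *
          X 2 ^ (3 + 1 + 4 * (4 * n + 3)) +
        X 0 ^ (8 * n + 7 + 1 + (4 * n + 3)) * X 1 ^ (4 * n + 3 + 2) * X 2 ^ (3 + 1))) +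
      ((X 0 ^ 2 * X 1 ^ 2 * X 2 - X 0 * X 1 * X 2 ^ 2) ^ q) := by
    rw [hpow]
    linear_combination (-(X 0 ^ (16 * n + 16) * X 1 ^ (16 * n + 16) * X 2 ^ (8 * n + 8) +
      X 0 ^ (8 * n + 8) * X 1 ^ (8 * n + 8) * X 2 ^ (16 * n + 16) +
      X 0 ^ (12 * n + 11) * X 1 ^ (4 * n + 5) * X 2 ^ 4) : R) * htwo
  rw [hfin]
  exact hsum
end
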